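/- Let f : ℝ → ℝ be bounded and differentiable, and suppose f attains its global maximum at a point x₀ ∈ ℝ (so f'(x₀) = 0 and f(x₀) ≥ f(α) for all α). Then for every 0 < ε < 1 for which the principal value integral converges, I₂ := PV ∫_ℝ [ f'(x₀) / ((x₀−α)/|x₀−α|^ε) − (1−ε)(f(x₀) − f(α))/|x₀−α|^{2−ε} ] · 1/(1 + ((f(x₀)−f(α)) |x₀−α|^ε/(x₀−α))²) dα ≤ 0. In particular, if f(·,t) is a regular solution of the regularized system ∂_t f − ε' ∂ₓ²f = PV ∫_ℝ ∂ₓ arctan(Δ_α^{ε'} f) dα attaining its spatial maximum at a finite point x_t, then M(t) = max_x f(x,t) satisfies M'(t) ≤ 0 at almost every such time t. -/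

import Mathlib

open MeasureTheory Filter Set Real Topology

noncomputable section

/-- Truncated domain `{α : δ ≤ |α| ≤ 1/δ}` for principal value integrals. -/
def pvSet (δ : ℝ) : Set ℝ := {α : ℝ | δ ≤ |α| ∧ |α| ≤ δ⁻¹}

/-- The principal value integral of `g` over `ℝ` exists and has value `L`. -/
def HasPV (g : ℝ → ℝ) (L : ℝ) : Prop :=
  Tendsto (fun δ : ℝ => ∫ α in pvSet δ, g α) (nhdsWithin 0 (Set.Ioi 0)) (nhds L)

/-- The principal value integral of `g` (junk value if the limit does not exist). -/
def pv (g : ℝ → ℝ) : ℝ :=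
  limUnder (nhdsWithin 0 (Set.Ioi 0)) (fun δ : ℝ => ∫ α in pvSet δ, g α)

/-- Sup norm (as a supremum of absolute values). -/
def supN (f : ℝ → ℝ) : ℝ := ⨆ x : ℝ, |f x|

/-- Homogeneous Hölder seminorm of exponent `γ`. -/
def holderS (γ : ℝ) (g : ℝ → ℝ) : ℝ :=
  ⨆ p : ℝ × ℝ, if p.1 = p.2 then (0:ℝ) else |g p.1 - g p.2| / |p.1 - p.2| ^ γ

/-- The `C^{2,γ}` norm: `‖f‖_∞ + ‖f'‖_∞ + ‖f''‖_∞ + |f''|_{Ċ^γ}`. -/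
def c2Norm (γ : ℝ) (f : ℝ → ℝ) : ℝ :=
  supN f + supN (deriv f) + supN (deriv (deriv f)) + holderS γ (deriv (deriv f))

/-- Membership in `C^{2,γ}(ℝ)`: twice continuously differentiable, `f`, `f'`, `f''`
bounded and `f''` uniformly `γ`-Hölder continuous. -/
def MemC2 (γ : ℝ) (f : ℝ → ℝ) : Prop :=
  ContDiff ℝ 2 f ∧ (∃ C, ∀ x, |f x| ≤ C) ∧ (∃ C, ∀ x, |deriv f x| ≤ C) ∧
    (∃ C, ∀ x, |deriv (deriv f) x| ≤ C) ∧
    ∃ H, ∀ x y, |deriv (deriv f) x - deriv (deriv f) y| ≤ H * |x - y| ^ γ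

/-- The `L²(ℝ)` norm. -/
def l2N (f : ℝ → ℝ) : ℝ := Real.sqrt (∫ x : ℝ, (f x) ^ 2)

/-- Membership in `L²(ℝ)`. -/
def MemL2 (f : ℝ → ℝ) : Prop := MeasureTheory.MemLp f 2 MeasureTheory.volume

/-- The regularized difference quotient `Δ_α^ε f (x) = (f x - f (x - α)) |α|^ε / α`. -/
def regDiff (ε : ℝ) (f : ℝ → ℝ) (α x : ℝ) : ℝ := (f x - f (x - α)) * |α| ^ ε / α

/-- `f` solves the regularized system
`∂ₜ f - ε ∂ₓ² f = PV ∫ ∂ₓ arctan (Δ_α^ε f) dα` on the time interval `(0,T]`. -/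
def IsRegSolution (ε : ℝ) (f : ℝ → ℝ → ℝ) (T : ℝ) : Prop :=
  ∀ t ∈ Set.Ioc (0:ℝ) T, ∀ x : ℝ,
    DifferentiableAt ℝ (fun s => f s x) t ∧
    HasPV (fun α => regDiff ε (deriv (f t)) α x / (1 + (regDiff ε (f t) α x) ^ 2))
      (deriv (fun s => f s x) t - ε * deriv (deriv (f t)) x)

/-- `f` solves the 2D Muskat contour equation
`∂ₜ f = PV ∫ (∂ₓf(x) - ∂ₓf(x-α)) α / (α² + (f(x) - f(x-α))²) dα` for times in `s`. -/
def IsMuskatSolution (f : ℝ → ℝ → ℝ) (s : Set ℝ) : Prop :=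
  ∀ t ∈ s, ∀ x : ℝ,
    DifferentiableAt ℝ (fun τ => f τ x) t ∧
    HasPV (fun α => (deriv (f t) x - deriv (f t) (x - α)) * α /
        (α ^ 2 + (f t x - f t (x - α)) ^ 2))
      (deriv (fun τ => f τ x) t)

end

/-!
At a maximum point `x` of `φ` one has `φ'(x) = 0`, so the integrand `∂ₓ arctan (Δ_α^ε φ)(x)`
equals `-∂_α arctan (Δ_α^ε φ)(x)` minus `(1 - ε)(φ(x) - φ(x - α))|α|^(ε-2) / (1 + (Δ_α^ε φ)²) ≥ 0`.
Integrating over `δ ≤ |α| ≤ 1/δ` bounds the truncated integral by the boundary values of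
`arctan (Δ_α^ε φ)(x)` at `α = ±δ, ±1/δ`, which vanish as `δ → 0` because `Δ_α^ε φ = O(|α|^ε)` at `0`
and `O(|α|^(ε-1))` at infinity. So the principal value is `≤ 0`, and with `φ''(x) ≤ 0` the equation
gives `∂ₜ f ≤ 0` at the maximum. The static inequality `I₂ ≤ 0` is simpler: once `f'(x₀) = 0` its
integrand is pointwise nonpositive.
-/

section RegDiff

variable {ε x : ℝ} {φ : ℝ → ℝ}

lemma hasDerivAt_abs_rpow_div_self {a : ℝ} (ha : a ≠ 0) :
    HasDerivAt (fun α : ℝ => |α| ^ ε / α) ((ε - 1) * |a| ^ (ε - 2)) a := by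
  have hpow := (hasDerivAt_abs ha).rpow_const (p := ε) (Or.inl (abs_ne_zero.2 ha))
  refine (hpow.fun_div (hasDerivAt_id' a) ha).congr_deriv ?_
  have h0 : 0 < |a| := abs_pos.2 ha
  have hsign : (SignType.sign a : ℝ) * a = |a| := by
    rcases ha.lt_or_gt with h | h <;> simp [h, abs_of_neg, abs_of_pos]
  rw [Real.rpow_sub h0, Real.rpow_sub h0, Real.rpow_one, Real.rpow_two, ← sq_abs a]
  field_simp
  linear_combination ε * hsign

lemma HasDerivAt.const_sub_comp_const_sub {φ' a : ℝ} (hφ : HasDerivAt φ φ' (x - a)) :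
    HasDerivAt (fun α => φ x - φ (x - α)) φ' a := by
  simpa using (hφ.comp a ((hasDerivAt_id a).const_sub x)).const_sub (φ x)

lemma hasDerivAt_regDiff {φ' a : ℝ} (hφ : HasDerivAt φ φ' (x - a)) (ha : a ≠ 0) :
    HasDerivAt (fun α => regDiff ε φ α x)
      (φ' * (|a| ^ ε / a) + (φ x - φ (x - a)) * ((ε - 1) * |a| ^ (ε - 2))) a := by
  simpa only [regDiff, mul_div_assoc] using
    hφ.const_sub_comp_const_sub.fun_mul (hasDerivAt_abs_rpow_div_self ha)

lemma continuousOn_regDiff (hφ : Continuous φ) :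
    ContinuousOn (fun α => regDiff ε φ α x) {0}ᶜ := by
  refine ContinuousOn.div ?_ continuousOn_id fun α hα => hα
  exact (by fun_prop : Continuous fun α => φ x - φ (x - α)).continuousOn.mul
    (continuous_abs.continuousOn.rpow_const fun α hα => Or.inl (abs_ne_zero.2 hα))

lemma tendsto_regDiff_nhdsNE_zero (hε : 0 < ε) (hφ : DifferentiableAt ℝ φ x) :
    Tendsto (fun α => regDiff ε φ α x) (𝓝[≠] 0) (𝓝 0) := by
  have hslope : Tendsto (fun α => α⁻¹ * (φ x - φ (x - α))) (𝓝[≠] 0) (𝓝 (deriv φ x)) := by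
    simpa using (HasDerivAt.const_sub_comp_const_sub (a := 0) (φ' := deriv φ x)
      (by rw [sub_zero]; exact hφ.hasDerivAt)).tendsto_slope_zero
  have hpow : Tendsto (fun α : ℝ => |α| ^ ε) (𝓝[≠] 0) (𝓝 0) :=
    ((continuous_abs.rpow_const fun _ => Or.inr hε.le).tendsto' 0 0
      (by simp [hε.ne'])).mono_left nhdsWithin_le_nhds
  convert hslope.mul hpow using 2 with α
  · simp only [regDiff]; ring
  · simp

lemma tendsto_regDiff_cobounded (hε : ε < 1) {C : ℝ} (hC : ∀ y, |φ y| ≤ C) :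
    Tendsto (fun α => regDiff ε φ α x) (Bornology.cobounded ℝ) (𝓝 0) := by
  have hdecay : Tendsto (fun α : ℝ => 2 * C * |α| ^ (ε - 1)) (Bornology.cobounded ℝ) (𝓝 0) := by
    have := (tendsto_rpow_neg_atTop (by linarith : 0 < 1 - ε)).comp
      (tendsto_norm_cobounded_atTop (E := ℝ))
    simpa using this.const_mul (2 * C)
  refine squeeze_zero_norm' ?_ hdecay
  filter_upwards [Bornology.eventually_ne_cobounded (0 : ℝ)] with α hα
  have h0 : 0 < |α| := abs_pos.2 hα
  have hdiff : |φ x - φ (x - α)| ≤ 2 * C := by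
    linarith [abs_sub (φ x) (φ (x - α)), hC x, hC (x - α)]
  rw [Real.norm_eq_abs, regDiff, abs_div, abs_mul, abs_of_nonneg (Real.rpow_nonneg h0.le ε),
    Real.rpow_sub_one h0.ne', mul_div_assoc]
  gcongr

end RegDiff

lemma pvSet_eq_union {δ : ℝ} (hδ : 0 < δ) : pvSet δ = Icc (-δ⁻¹) (-δ) ∪ Icc δ δ⁻¹ := by
  ext α
  simp only [pvSet, mem_ofPred_eq, mem_union, mem_Icc]
  rcases le_or_gt 0 α with hα | hα
  · rw [abs_of_nonneg hα]
    constructor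
    · exact Or.inr
    · rintro (h | h) <;> constructor <;> linarith [h.1, h.2]
  · rw [abs_of_neg hα]
    constructor
    · rintro ⟨h1, h2⟩; left; constructor <;> linarith
    · rintro (h | h) <;> constructor <;> linarith [h.1, h.2]

section ArctanFlux

variable {ε x : ℝ} {φ : ℝ → ℝ}

lemma integrableOn_regDiff_div {ψ : ℝ → ℝ} (hφ : Continuous φ) (hψ : Continuous ψ) {s : Set ℝ}
    (hs : IsCompact s) (h0 : (0 : ℝ) ∉ s) :
    IntegrableOn (fun α => regDiff ε ψ α x / (1 + regDiff ε φ α x ^ 2)) s := by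
  refine ContinuousOn.integrableOn_compact hs ?_
  refine ((continuousOn_regDiff hψ).div (continuousOn_const.add ((continuousOn_regDiff hφ).pow 2))
    fun α _ => (add_pos_of_pos_of_nonneg one_pos (sq_nonneg _)).ne').mono fun α hα h => h0 ?_
  rwa [← mem_singleton_iff.1 h]

lemma integral_regDiff_arctan_le (hε : ε ≤ 1) (hφ : ContDiff ℝ 1 φ) (hmax : ∀ y, φ y ≤ φ x)
    {a b : ℝ} (hab : a ≤ b) (h0 : (0 : ℝ) ∉ Icc a b) :
    ∫ α in Icc a b, regDiff ε (deriv φ) α x / (1 + regDiff ε φ α x ^ 2)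
      ≤ arctan (regDiff ε φ a x) - arctan (regDiff ε φ b x) := by
  have hd : deriv φ x = 0 := IsLocalMax.deriv_eq_zero (.of_forall hmax)
  have hne : ∀ α ∈ Icc a b, α ≠ 0 := fun α hα h => h0 (h ▸ hα)
  set D : ℝ → ℝ := fun α => 1 + regDiff ε φ α x ^ 2
  set g' : ℝ → ℝ := fun α => -(1 / D α * (deriv φ (x - α) * (|α| ^ ε / α) +
    (φ x - φ (x - α)) * ((ε - 1) * |α| ^ (ε - 2))))
  have hg : ∀ α ∈ Icc a b, HasDerivAt (fun β => -arctan (regDiff ε φ β x)) (g' α) α :=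
    fun α hα =>
      (hasDerivAt_regDiff ((hφ.differentiable one_ne_zero) _).hasDerivAt (hne α hα)).arctan.neg
  have hle : ∀ α ∈ Icc a b, regDiff ε (deriv φ) α x / D α ≤ g' α := by
    intro α _
    have hD : 0 < D α := by simp only [D]; positivity
    have hgap : 0 ≤ (1 - ε) * (φ x - φ (x - α)) * |α| ^ (ε - 2) :=
      mul_nonneg (mul_nonneg (by linarith) (sub_nonneg.2 (hmax _))) (by positivity)
    have hgap_eq : g' α - regDiff ε (deriv φ) α x / D α =
        (1 - ε) * (φ x - φ (x - α)) * |α| ^ (ε - 2) / D α := by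
      simp only [g', regDiff, hd]
      field_simp
      ring
    linarith [div_nonneg hgap hD.le]
  rw [integral_Icc_eq_integral_Ioc, ← intervalIntegral.integral_of_le hab]
  convert intervalIntegral.integral_le_sub_of_hasDeriv_right_of_le hab
    (fun α hα => (hg α hα).continuousAt.continuousWithinAt)
    (fun α hα => (hg α (Ioo_subset_Icc_self hα)).hasDerivWithinAt)
    (integrableOn_regDiff_div hφ.continuous (hφ.continuous_deriv le_rfl) isCompact_Icc h0)
    (fun α hα => hle α (Ioo_subset_Icc_self hα)) using 1
  ring

lemma integral_pvSet_regDiff_arctan_le (hε : ε ≤ 1) (hφ : ContDiff ℝ 1 φ)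
    (hmax : ∀ y, φ y ≤ φ x) {δ : ℝ} (hδ0 : 0 < δ) (hδ1 : δ ≤ 1) :
    ∫ α in pvSet δ, regDiff ε (deriv φ) α x / (1 + regDiff ε φ α x ^ 2)
      ≤ (arctan (regDiff ε φ (-δ⁻¹) x) - arctan (regDiff ε φ (-δ) x)) +
        (arctan (regDiff ε φ δ x) - arctan (regDiff ε φ δ⁻¹ x)) := by
  have hδinv : δ ≤ δ⁻¹ := hδ1.trans ((one_le_inv₀ hδ0).2 hδ1)
  have hneg : (0 : ℝ) ∉ Icc (-δ⁻¹) (-δ) := fun h => by linarith [h.2]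
  have hpos : (0 : ℝ) ∉ Icc δ δ⁻¹ := fun h => by linarith [h.1]
  have hcont := hφ.continuous
  have hcont' := hφ.continuous_deriv le_rfl
  have hdisj : Disjoint (Icc (-δ⁻¹) (-δ)) (Icc δ δ⁻¹) :=
    disjoint_left.2 fun α h1 h2 => by linarith [h1.2, h2.1]
  rw [pvSet_eq_union hδ0, setIntegral_union hdisj measurableSet_Icc
    (integrableOn_regDiff_div hcont hcont' isCompact_Icc hneg)
    (integrableOn_regDiff_div hcont hcont' isCompact_Icc hpos)]
  exact add_le_add (integral_regDiff_arctan_le hε hφ hmax (neg_le_neg hδinv) hneg)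
    (integral_regDiff_arctan_le hε hφ hmax hδinv hpos)

lemma tendsto_arctan_regDiff_boundary (hε : ε ∈ Ioo 0 1) (hφ : DifferentiableAt ℝ φ x)
    {C : ℝ} (hC : ∀ y, |φ y| ≤ C) :
    Tendsto (fun δ : ℝ => (arctan (regDiff ε φ (-δ⁻¹) x) - arctan (regDiff ε φ (-δ) x)) +
        (arctan (regDiff ε φ δ x) - arctan (regDiff ε φ δ⁻¹ x))) (𝓝[>] 0) (𝓝 0) := by
  have harctan : Tendsto arctan (𝓝 0) (𝓝 0) := by simpa using continuous_arctan.tendsto 0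
  have hsmall := harctan.comp (tendsto_regDiff_nhdsNE_zero hε.1 hφ)
  have hlarge := harctan.comp (tendsto_regDiff_cobounded (x := x) hε.2 hC)
  have hpos : Tendsto (fun δ : ℝ => δ) (𝓝[>] 0) (𝓝[≠] 0) :=
    tendsto_id.mono_left (nhdsGT_le_nhdsNE 0)
  have hneg : Tendsto (fun δ : ℝ => -δ) (𝓝[>] 0) (𝓝[≠] 0) := by
    simpa using (tendsto_neg_nhdsGT_neg (a := (0 : ℝ))).mono_right (nhdsLT_le_nhdsNE 0)
  have hinv := tendsto_inv₀_nhdsNE_zero.comp hpos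
  simpa using ((hlarge.comp (tendsto_neg_cobounded.comp hinv)).sub (hsmall.comp hneg)).add
    ((hsmall.comp hpos).sub (hlarge.comp hinv))

theorem HasPV.regDiff_arctan_nonpos (hε : ε ∈ Ioo 0 1) (hφ : ContDiff ℝ 1 φ) {C : ℝ}
    (hC : ∀ y, |φ y| ≤ C) (hmax : ∀ y, φ y ≤ φ x) {L : ℝ}
    (hL : HasPV (fun α => regDiff ε (deriv φ) α x / (1 + regDiff ε φ α x ^ 2)) L) : L ≤ 0 := by
  refine le_of_tendsto_of_tendsto hL
    (tendsto_arctan_regDiff_boundary hε (hφ.differentiable one_ne_zero x) hC) ?_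
  filter_upwards [Ioc_mem_nhdsGT one_pos] with δ hδ
  exact integral_pvSet_regDiff_arctan_le hε.2.le hφ hmax hδ.1 hδ.2

end ArctanFlux

lemma IsLocalMax.deriv_deriv_nonpos {f : ℝ → ℝ} {x : ℝ} (h : IsLocalMax f x)
    (hc : ContinuousAt f x) : deriv (deriv f) x ≤ 0 := by
  by_contra! hpos
  have hmin := isLocalMin_of_deriv_deriv_pos hpos h.deriv_eq_zero hc
  have hconst : f =ᶠ[𝓝 x] fun _ => f x := (hmin.and h).mono fun y hy => le_antisymm hy.2 hy.1
  have hd : deriv f =ᶠ[𝓝 x] fun _ => 0 := hconst.deriv.trans (by simp)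
  simp [hd.deriv_eq] at hpos

/-- Sign of the velocity at a spatial maximum. First part: at a global
maximum point `x₀` of a bounded differentiable `f`, any value `L` of the principal value
integral `I₂` (written after the change of variables `α ↦ x₀ - α`) satisfies `L ≤ 0`.
Second part: for a regular solution of the regularized system attaining its spatial
maximum at a finite point `x_t`, one has `M'(t) = ∂ₜ f(x_t, t) ≤ 0`. -/
theorem velocity_nonpositive_at_maximum :
    -- Part 1: the static inequality `I₂ ≤ 0` at a global maximum point
    (∀ f : ℝ → ℝ, Differentiable ℝ f → (∃ C, ∀ x, |f x| ≤ C) →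
      ∀ x₀ : ℝ, (∀ α : ℝ, f α ≤ f x₀) →
      ∀ ε ∈ Set.Ioo (0:ℝ) 1, ∀ L : ℝ,
        HasPV (fun β =>
          (deriv f x₀ * |β| ^ ε / β -
              (1 - ε) * (f x₀ - f (x₀ - β)) / |β| ^ (2 - ε)) /
            (1 + ((f x₀ - f (x₀ - β)) * |β| ^ ε / β) ^ 2)) L →
        L ≤ 0) ∧
    -- Part 2: decay of the maximum for regular solutions of the regularized system
    (∀ ε' T : ℝ, ε' ∈ Set.Ioo (0:ℝ) 1 → 0 < T →
      ∀ f : ℝ → ℝ → ℝ,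
        IsRegSolution ε' f T →
        (∀ t ∈ Set.Icc (0:ℝ) T, ContDiff ℝ 2 (f t) ∧
          ∃ K : ℝ, ∀ x : ℝ, |f t x| ≤ K ∧ |deriv (f t) x| ≤ K ∧ |deriv (deriv (f t)) x| ≤ K) →
        ∀ t ∈ Set.Ioc (0:ℝ) T, ∀ xt : ℝ, (∀ x : ℝ, f t x ≤ f t xt) →
          deriv (fun s => f s xt) t ≤ 0) := by
  constructor
  · intro f _ _ x₀ hmax ε hε L hL
    have hd : deriv f x₀ = 0 := IsLocalMax.deriv_eq_zero (.of_forall hmax)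
    refine le_of_tendsto hL (.of_forall fun δ => integral_nonpos fun β =>
      div_nonpos_of_nonpos_of_nonneg ?_ (by positivity))
    rw [hd, zero_mul, zero_div, zero_sub, neg_nonpos]
    exact div_nonneg (mul_nonneg (by linarith [hε.2]) (sub_nonneg.2 (hmax _))) (by positivity)
  · intro ε' T hε' _ f hreg hbounds t ht xt hmax
    obtain ⟨-, hL⟩ := hreg t ht xt
    obtain ⟨hf, K, hK⟩ := hbounds t (Ioc_subset_Icc_self ht)
    have hflux := hL.regDiff_arctan_nonpos hε' (hf.of_le one_le_two) (fun y => (hK y).1) hmax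
    have hconcave := IsLocalMax.deriv_deriv_nonpos (.of_forall hmax) hf.continuous.continuousAt
    linarith [mul_nonpos_of_nonneg_of_nonpos hε'.1.le hconcave]
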